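/- arXiv:0901.2139 — 2 statements merged into one kernel-verified Lean document; each statement's English description precedes it below -/
import Mathlib

section
/- The closure K of the union over all n ∈ ℕ of the sets EFix(fⁿ, α, ℓ) is a uniformly expanding set; moreover for every n ∈ ℕ, Fix(fⁿ) ∩ K ∩ EFix(fⁿ) = EFix(fⁿ, α, ℓ). -/
open Filter

variable {E : Type*} [NormedAddCommGroup E] [NormedSpace ℝ E]

/-- The conorm (minimum norm) `‖A⁻¹‖⁻¹` of a continuous linear map `A`. -/
noncomputable def conorm (A : E →L[ℝ] E) : ℝ :=
  sInf {r | ∃ v : E, ‖v‖ = 1 ∧ r = ‖A v‖}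

/-- `EFixSet f n α ℓ`: fixed points `x` of `f^[n]` with
`‖(df^k(f^i x))⁻¹‖⁻¹ ≥ (1/ℓ) e^{kα}` for all `k ∈ ℕ` and `0 ≤ i ≤ n-1`. -/
def EFixSet (f : E → E) (n : ℕ) (α : ℝ) (ℓ : ℕ) : Set E :=
  {x | f^[n] x = x ∧ ∀ k : ℕ, ∀ i < n,
    (1 / (ℓ : ℝ)) * Real.exp (k * α) ≤ conorm (fderiv ℝ (f^[k]) (f^[i] x))}

/-- The set `Λ_{α,ℓ}` of points with uniform expansion estimates along the forward orbit. -/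
def LambdaSet (f : E → E) (α : ℝ) (ℓ : ℕ) : Set E :=
  {x | ∀ k : ℕ, (1 / (ℓ : ℝ)) * Real.exp (k * α) ≤ conorm (fderiv ℝ (f^[k]) x)}

/-- The smallest Lyapunov exponent at a point `x`. -/
noncomputable def lyapMin (f : E → E) (x : E) : ℝ :=
  Filter.atTop.limsup (fun k : ℕ => Real.log (conorm (fderiv ℝ (f^[k]) x)) / k)

/-- `K = K_{α,ℓ}`: the closure of the union over `n ≥ 1` of the sets `EFix(fⁿ,α,ℓ)`. -/
def Kset (f : E → E) (α : ℝ) (ℓ : ℕ) : Set E :=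
  closure (⋃ n : ℕ, EFixSet f (n + 1) α ℓ)

/-!
`K` is a closed subset of the compact set `Λ`, it is forward invariant because each `EFix(fⁿ)` is
and `f` is continuous, and it lies in `Λ_{α,ℓ}` because that set is closed: the conorm is
1-Lipschitz and `x ↦ dfᵏ(x)` is continuous.

For the identity, a fixed point of `fⁿ` in `K` has its whole orbit in `K ⊆ Λ_{α,ℓ}`. Conversely,
on `EFix(fⁿ, α, ℓ)` the expansion estimate gives `log ‖(dfᵏ)⁻¹‖⁻¹ / k ≥ α - (log ℓ) / k`, while
periodicity bounds `‖dfᵏ‖` by `Mᵏ` with `M` the largest `‖df‖` along the orbit, so these quotients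
are bounded and their limsup, the smallest Lyapunov exponent, is at least `α > 0`.
-/

open Topology

section Conorm

lemma conorm_le_norm_apply (A : E →L[ℝ] E) {v : E} (hv : ‖v‖ = 1) : conorm A ≤ ‖A v‖ :=
  csInf_le ⟨0, by rintro r ⟨w, -, rfl⟩; exact norm_nonneg _⟩ ⟨v, hv, rfl⟩

lemma conorm_eq_zero_of_forall_norm_ne_one (h : ∀ v : E, ‖v‖ ≠ 1) (A : E →L[ℝ] E) :
    conorm A = 0 := by
  have hempty : {r | ∃ v : E, ‖v‖ = 1 ∧ r = ‖A v‖} = ∅ :=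
    Set.eq_empty_iff_forall_notMem.2 fun _ ⟨v, hv, _⟩ ↦ h v hv
  rw [conorm, hempty, Real.sInf_empty]

lemma conorm_le_opNorm (A : E →L[ℝ] E) : conorm A ≤ ‖A‖ := by
  by_cases h : ∀ v : E, ‖v‖ ≠ 1
  · rw [conorm_eq_zero_of_forall_norm_ne_one h]
    exact norm_nonneg A
  · obtain ⟨v, hv⟩ := not_forall_not.1 h
    calc conorm A ≤ ‖A v‖ := conorm_le_norm_apply A hv
      _ ≤ ‖A‖ := by simpa [hv] using A.le_opNorm v

lemma conorm_le_conorm_add_norm_sub (A B : E →L[ℝ] E) : conorm A ≤ conorm B + ‖A - B‖ := by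
  by_cases h : ∀ v : E, ‖v‖ ≠ 1
  · simp only [conorm_eq_zero_of_forall_norm_ne_one h, zero_add, norm_nonneg]
  · obtain ⟨v₀, hv₀⟩ := not_forall_not.1 h
    rw [← sub_le_iff_le_add]
    refine le_csInf ⟨_, v₀, hv₀, rfl⟩ ?_
    rintro r ⟨v, hv, rfl⟩
    have hAB : ‖A v‖ ≤ ‖B v‖ + ‖A - B‖ := calc
      ‖A v‖ = ‖B v + (A - B) v‖ := by simp
      _ ≤ ‖B v‖ + ‖(A - B) v‖ := norm_add_le _ _
      _ ≤ ‖B v‖ + ‖A - B‖ := by simpa [hv] using (A - B).le_opNorm v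
    linarith [conorm_le_norm_apply A hv]

lemma lipschitzWith_one_conorm : LipschitzWith 1 (conorm : (E →L[ℝ] E) → ℝ) :=
  LipschitzWith.of_le_add fun A B ↦ by
    simpa only [dist_eq_norm] using conorm_le_conorm_add_norm_sub A B

end Conorm

protected lemma ContDiff.iterate {f : E → E} (hf : ContDiff ℝ 1 f) (k : ℕ) :
    ContDiff ℝ 1 f^[k] := by
  induction k with
  | zero => exact contDiff_id
  | succ k ih => rw [Function.iterate_succ']; exact hf.comp ih

lemma fderiv_iterate_succ {f : E → E} (hf : Differentiable ℝ f) (k : ℕ) (x : E) :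
    fderiv ℝ f^[k + 1] x = (fderiv ℝ f (f^[k] x)).comp (fderiv ℝ f^[k] x) := by
  rw [Function.iterate_succ']
  exact fderiv_comp x (hf _) (hf.iterate k _)

lemma norm_fderiv_iterate_le_pow {f : E → E} (hf : Differentiable ℝ f) {x : E} {M : ℝ}
    (hM : ∀ i, ‖fderiv ℝ f (f^[i] x)‖ ≤ M) (k : ℕ) : ‖fderiv ℝ f^[k] x‖ ≤ M ^ k := by
  induction k with
  | zero => simpa using ContinuousLinearMap.norm_id_le
  | succ k ih =>
    rw [fderiv_iterate_succ hf, pow_succ']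
    exact (ContinuousLinearMap.opNorm_comp_le _ _).trans
      (mul_le_mul (hM k) ih (norm_nonneg _) ((norm_nonneg _).trans (hM 0)))

lemma Function.IsPeriodicPt.bddAbove_range_comp_iterate {α : Type*} {f : α → α} {n : ℕ}
    {x : α} (hx : Function.IsPeriodicPt f n x) (hn : 0 < n) (g : α → ℝ) :
    BddAbove (Set.range fun i ↦ g (f^[i] x)) := by
  refine ((Set.finite_Iio n).image fun i ↦ g (f^[i] x)).bddAbove.mono ?_
  rintro _ ⟨i, rfl⟩
  exact ⟨i % n, Nat.mod_lt i hn, by simp only [hx.iterate_mod_apply]⟩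

section Expanding

variable {f : E → E} {α : ℝ} {ℓ : ℕ}

lemma isClosed_lambdaSet (hf : ContDiff ℝ 1 f) : IsClosed (LambdaSet f α ℓ) := by
  simp only [LambdaSet, Set.ofPred_forall]
  exact isClosed_iInter fun k ↦ isClosed_le continuous_const
    (lipschitzWith_one_conorm.continuous.comp ((hf.iterate k).continuous_fderiv one_ne_zero))

lemma mapsTo_efixSet (n : ℕ) : Set.MapsTo f (EFixSet f n α ℓ) (EFixSet f n α ℓ) := by
  rintro x ⟨hfix, hbd⟩
  have hper : Function.IsPeriodicPt f n x := hfix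
  refine ⟨hper.apply, fun k i hi ↦ ?_⟩
  rw [← Function.iterate_succ_apply, ← hper.iterate_mod_apply]
  exact hbd k _ (Nat.mod_lt _ (by omega))

lemma efixSet_subset_lambdaSet {n : ℕ} (hn : 0 < n) : EFixSet f n α ℓ ⊆ LambdaSet f α ℓ :=
  fun _ hx k ↦ by simpa using hx.2 k 0 hn

lemma le_lyapMin_of_mem_lambdaSet (hf : Differentiable ℝ f) (hℓ : 1 ≤ ℓ) {x : E}
    (hx : x ∈ LambdaSet f α ℓ)
    (hbdd : BddAbove (Set.range fun i ↦ ‖fderiv ℝ f (f^[i] x)‖)) : α ≤ lyapMin f x := by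
  obtain ⟨M, hM⟩ := hbdd
  have hpos (k : ℕ) : 0 < conorm (fderiv ℝ f^[k] x) :=
    lt_of_lt_of_le (by positivity) (hx k)
  have hupper : ∀ᶠ k : ℕ in atTop, Real.log (conorm (fderiv ℝ f^[k] x)) / k ≤ Real.log M := by
    filter_upwards [eventually_ge_atTop 1] with k hk
    have hconorm : conorm (fderiv ℝ f^[k] x) ≤ M ^ k :=
      (conorm_le_opNorm _).trans (norm_fderiv_iterate_le_pow hf (fun i ↦ hM ⟨i, rfl⟩) k)
    rw [div_le_iff₀ (by positivity), mul_comm, ← Real.log_pow]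
    exact Real.log_le_log (hpos k) hconorm
  have hlower : ∀ᶠ k : ℕ in atTop,
      α - Real.log ℓ / k ≤ Real.log (conorm (fderiv ℝ f^[k] x)) / k := by
    filter_upwards [eventually_ge_atTop 1] with k hk
    have hk' : (0 : ℝ) < k := by positivity
    have hlog : k * α - Real.log ℓ ≤ Real.log (conorm (fderiv ℝ f^[k] x)) := by
      have := Real.log_le_log (by positivity) (hx k)
      rwa [Real.log_mul (by positivity) (Real.exp_ne_zero _), Real.log_exp, one_div,
        Real.log_inv, neg_add_eq_sub] at this
    rw [le_div_iff₀ hk', sub_mul, div_mul_cancel₀ _ hk'.ne', mul_comm]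
    exact hlog
  have htend : Tendsto (fun k : ℕ ↦ α - Real.log ℓ / k) atTop (𝓝 α) := by
    simpa using tendsto_const_nhds.sub (tendsto_const_div_atTop_nhds_zero_nat (Real.log ℓ))
  calc α = limsup (fun k : ℕ ↦ α - Real.log ℓ / k) atTop := htend.limsup_eq.symm
    _ ≤ lyapMin f x :=
      limsup_le_limsup hlower htend.isCoboundedUnder_le ⟨_, hupper⟩

lemma le_lyapMin_of_mem_efixSet (hf : Differentiable ℝ f) (hℓ : 1 ≤ ℓ) {n : ℕ} (hn : 0 < n)
    {x : E} (hx : x ∈ EFixSet f n α ℓ) : α ≤ lyapMin f x :=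
  le_lyapMin_of_mem_lambdaSet hf hℓ (efixSet_subset_lambdaSet hn hx)
    (Function.IsPeriodicPt.bddAbove_range_comp_iterate hx.1 hn (‖fderiv ℝ f ·‖))

lemma efixSet_subset_kset {n : ℕ} (hn : 0 < n) : EFixSet f n α ℓ ⊆ Kset f α ℓ := by
  obtain ⟨m, rfl⟩ := Nat.exists_eq_add_one_of_ne_zero hn.ne'
  exact (Set.subset_iUnion (fun m ↦ EFixSet f (m + 1) α ℓ) m).trans subset_closure

lemma mapsTo_kset (hf : Continuous f) : Set.MapsTo f (Kset f α ℓ) (Kset f α ℓ) :=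
  (Set.mapsTo_iUnion_iUnion fun n ↦ mapsTo_efixSet (n + 1)).closure hf

lemma kset_subset_lambdaSet (hf : ContDiff ℝ 1 f) : Kset f α ℓ ⊆ LambdaSet f α ℓ :=
  closure_minimal (Set.iUnion_subset fun n ↦ efixSet_subset_lambdaSet n.succ_pos)
    (isClosed_lambdaSet hf)

end Expanding

theorem stmt3_general (f : E → E) (hf : ContDiff ℝ 1 f)
    (α : ℝ) (hα : 0 < α) (ℓ : ℕ) (hℓ : 1 ≤ ℓ)
    (Λ : Set E) (hΛ : IsCompact Λ)
    (hsub : ∀ n : ℕ, EFixSet f (n + 1) α ℓ ⊆ Λ) :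
    (IsCompact (Kset f α ℓ) ∧ Set.MapsTo f (Kset f α ℓ) (Kset f α ℓ) ∧
        Kset f α ℓ ⊆ LambdaSet f α ℓ) ∧
      ∀ n : ℕ, 1 ≤ n →
        {x | f^[n] x = x} ∩ Kset f α ℓ ∩ {x | f^[n] x = x ∧ 0 < lyapMin f x} =
          EFixSet f n α ℓ := by
  have hKΛ : Kset f α ℓ ⊆ Λ := closure_minimal (Set.iUnion_subset hsub) hΛ.isClosed
  have hKmaps : Set.MapsTo f (Kset f α ℓ) (Kset f α ℓ) := mapsTo_kset hf.continuous
  refine ⟨⟨hΛ.of_isClosed_subset isClosed_closure hKΛ, hKmaps, kset_subset_lambdaSet hf⟩,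
    fun n hn ↦ Set.Subset.antisymm ?_ ?_⟩
  · rintro x ⟨⟨hfix, hK⟩, -⟩
    exact ⟨hfix, fun k i _ ↦ kset_subset_lambdaSet hf (hKmaps.iterate i hK) k⟩
  · intro x hx
    exact ⟨⟨hx.1, efixSet_subset_kset hn hx⟩, hx.1,
      hα.trans_le (le_lyapMin_of_mem_efixSet (hf.differentiable one_ne_zero) hℓ hn hx)⟩

/-- `K` is a uniformly expanding set (compact, forward invariant, contained in
`Λ_{α,ℓ}`), and for every `n ≥ 1`, `Fix(fⁿ) ∩ K ∩ EFix(fⁿ) = EFix(fⁿ, α, ℓ)`. -/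
theorem stmt3 (f : E → E) (hf : ContDiff ℝ 1 f)
    (α : ℝ) (hα : 0 < α) (ℓ : ℕ) (hℓ : 1 ≤ ℓ)
    (Λ : Set E) (hΛ : IsCompact Λ) (hinv : Set.MapsTo f Λ Λ)
    (hsub : ∀ n : ℕ, EFixSet f (n + 1) α ℓ ⊆ Λ) :
    (IsCompact (Kset f α ℓ) ∧ Set.MapsTo f (Kset f α ℓ) (Kset f α ℓ) ∧
        Kset f α ℓ ⊆ LambdaSet f α ℓ) ∧
      ∀ n : ℕ, 1 ≤ n →
        {x | f^[n] x = x} ∩ Kset f α ℓ ∩ {x | f^[n] x = x ∧ 0 < lyapMin f x} =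
          EFixSet f n α ℓ :=
  stmt3_general f hf α hα ℓ hℓ Λ hΛ hsub
end

section
/- (Pliss-type hyperbolic times) If x satisfies liminf_{n→∞} (1/n) Σ_{k=0}^{n−1} a_k ≥ β > α > 0, where a_k = log ‖(df(fᵏ(x)))⁻¹‖⁻¹ is a bounded sequence, then there exist infinitely many m ∈ ℕ which are hyperbolic times for x with exponent α, i.e., Σ_{j=m−k}^{m−1} a_j ≥ kα for every 1 ≤ k ≤ m. -/
/-!
Subtracting `α` from every term, the partial sums `S n = ∑_{k<n} (a k - α)` grow at least
like `(c - α) n` for some `c > α`, hence tend to `+∞`. A time `m` at which `S` exceeds all of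
its earlier values (a "high score") is a hyperbolic time, since `∑_{j=m-k}^{m-1} a_j - kα`
is exactly `S m - S (m - k)`; and a sequence tending to `+∞` has infinitely many high scores.
-/

open Filter Finset

/-- Unlike `Filter.eventually_lt_of_lt_liminf`, no boundedness is assumed: for an unbounded
sequence the liminf in `ℝ` is the junk value `0`, which `0 ≤ b` excludes. -/
theorem Real.exists_lt_eventually_le_of_lt_liminf {ι : Type*} {f : Filter ι} {u : ι → ℝ}
    {b : ℝ} (hb : 0 ≤ b) (h : b < liminf u f) : ∃ c, b < c ∧ ∀ᶠ x in f, c ≤ u x := by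
  rw [liminf_eq] at h
  rcases Set.eq_empty_or_nonempty {c | ∀ᶠ x in f, c ≤ u x} with hempty | hne
  · rw [hempty, Real.sSup_empty] at h
    exact absurd h hb.not_gt
  · obtain ⟨c, hc, hbc⟩ := exists_lt_of_lt_csSup hne h
    exact ⟨c, hbc, hc⟩

theorem tendsto_sum_range_sub_atTop {a : ℕ → ℝ} {α c : ℝ} (hαc : α < c)
    (h : ∀ᶠ n in atTop, c ≤ (∑ k ∈ range n, a k) / n) :
    Tendsto (fun n => ∑ k ∈ range n, (a k - α)) atTop atTop := by
  have hlin : Tendsto (fun n : ℕ => (c - α) * n) atTop atTop :=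
    tendsto_natCast_atTop_atTop.const_mul_atTop (sub_pos.2 hαc)
  refine tendsto_atTop_mono' _ ?_ hlin
  filter_upwards [h, eventually_gt_atTop 0] with n hn hpos
  have hsum : c * n ≤ ∑ k ∈ range n, a k := (le_div_iff₀ (Nat.cast_pos.2 hpos)).1 hn
  rw [sum_sub_distrib, sum_const, card_range, nsmul_eq_mul]
  linarith

theorem sum_Ico_sub_eq_sum_range_sub (a : ℕ → ℝ) (α : ℝ) {k m : ℕ} (hkm : k ≤ m) :
    ∑ j ∈ Ico (m - k) m, a j - k * α =
      ∑ j ∈ range m, (a j - α) - ∑ j ∈ range (m - k), (a j - α) := by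
  rw [← sum_Ico_eq_sub _ (Nat.sub_le m k), sum_sub_distrib, sum_const, Nat.card_Ico,
    Nat.sub_sub_self hkm, nsmul_eq_mul]

theorem mul_le_sum_Ico_of_forall_lt {a : ℕ → ℝ} {α : ℝ} {m : ℕ}
    (hm : ∀ j < m, ∑ i ∈ range j, (a i - α) < ∑ i ∈ range m, (a i - α)) {k : ℕ}
    (hk : 1 ≤ k) (hkm : k ≤ m) : (k : ℝ) * α ≤ ∑ j ∈ Ico (m - k) m, a j := by
  have hrecord := hm (m - k) (Nat.sub_lt (by omega) hk)
  have := sum_Ico_sub_eq_sum_range_sub a α hkm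
  linarith

theorem stmt13_general (a : ℕ → ℝ) (α β : ℝ)
    (hα : 0 < α) (hαβ : α < β)
    (hliminf : β ≤ Filter.atTop.liminf (fun n : ℕ => (∑ k ∈ Finset.range n, a k) / n)) :
    {m : ℕ | ∀ k : ℕ, 1 ≤ k → k ≤ m →
      (k : ℝ) * α ≤ ∑ j ∈ Finset.Ico (m - k) m, a j}.Infinite := by
  obtain ⟨c, hαc, hc⟩ :=
    Real.exists_lt_eventually_le_of_lt_liminf hα.le (hαβ.trans_le hliminf)
  have hrecords := frequently_high_scores (tendsto_sum_range_sub_atTop hαc hc)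
  exact Nat.frequently_atTop_iff_infinite.1
    (hrecords.mono fun _ hm _ hk hkm => mul_le_sum_Ico_of_forall_lt hm hk hkm)

/-- Pliss-type hyperbolic times: if `(a_k)` is bounded above by `A` and
`liminf_n (1/n) ∑_{k<n} a_k ≥ β > α > 0`, then there are infinitely many `m ∈ ℕ`
which are hyperbolic times with exponent `α`, i.e. `∑_{j=m-k}^{m-1} a_j ≥ kα` for
every `1 ≤ k ≤ m`. -/
theorem stmt13 (a : ℕ → ℝ) (A : ℝ) (hA : ∀ k, a k ≤ A) (α β : ℝ)
    (hα : 0 < α) (hαβ : α < β)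
    (hliminf : β ≤ Filter.atTop.liminf (fun n : ℕ => (∑ k ∈ Finset.range n, a k) / n)) :
    {m : ℕ | ∀ k : ℕ, 1 ≤ k → k ≤ m →
      (k : ℝ) * α ≤ ∑ j ∈ Finset.Ico (m - k) m, a j}.Infinite :=
  stmt13_general a α β hα hαβ hliminf
end
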